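/- For any prime p ≥ 5, the double sum S = ∑_{1 ≤ i < j ≤ p-1} 1/(i·j) (a rational number) satisfies S ≡ 0 (mod p), in the sense that either S = 0 or padicValRat p (S) ≥ 1. -/

import Mathlib

/-!
Modulo `p` the sum is the second elementary symmetric function of `1⁻¹, …, (p-1)⁻¹`, i.e. of
all nonzero residues, and `2 e₂ = (∑ x)² - ∑ x²`. Both power sums vanish in `𝔽_p` once `p > 3`,
and `2` is invertible there. To pass from `ℚ` to `𝔽_p`, multiply by `((p-1)!)²`, which is prime
to `p` and clears every denominator.
-/

open Finset Nat

theorem ZMod.sum_range_natCast {n : ℕ} [NeZero n] {M : Type*} [AddCommMonoid M]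
    (f : ZMod n → M) : ∑ k ∈ range n, f k = ∑ x : ZMod n, f x :=
  sum_nbij' (↑) ZMod.val (by simp) (fun x _ => mem_range.2 x.val_lt)
    (fun _ hk => ZMod.val_natCast_of_lt (mem_range.1 hk)) (fun x _ => ZMod.natCast_zmod_val x)
    fun _ _ => rfl

theorem two_mul_sum_range_sum_range_mul_add_sum_sq {R : Type*} [CommSemiring R]
    (f : ℕ → R) (n : ℕ) :
    2 * ∑ j ∈ range n, ∑ i ∈ range j, f i * f j + ∑ i ∈ range n, f i ^ 2 =
      (∑ i ∈ range n, f i) ^ 2 := by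
  induction n with
  | zero => simp
  | succ n ih =>
    rw [sum_range_succ, sum_range_succ, sum_range_succ, ← sum_mul, add_sq, ← ih]
    ring

theorem sum_Icc_sum_Ico_eq_sum_range_sum_range {M : Type*} [AddCommMonoid M]
    (g : ℕ → ℕ → M) (hg : ∀ j, g 0 j = 0) (n : ℕ) :
    ∑ j ∈ Icc 1 (n - 1), ∑ i ∈ Ico 1 j, g i j = ∑ j ∈ range n, ∑ i ∈ range j, g i j := by
  have hrange (m : ℕ) : ∑ i ∈ range m, g i m = ∑ i ∈ Ico 1 m, g i m := by
    cases m with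
    | zero => simp
    | succ m => rw [range_eq_Ico, sum_eq_sum_Ico_succ_bot m.succ_pos, hg, zero_add]
  cases n with
  | zero => simp
  | succ n =>
    rw [range_eq_Ico, sum_eq_sum_Ico_succ_bot n.succ_pos, Nat.add_sub_cancel,
      ← Ico_add_one_right_eq_Icc]
    simp [hrange]

namespace ZMod

variable {p : ℕ}

theorem natCast_ne_zero_of_pos_of_lt {k : ℕ} (hk : 0 < k) (hkp : k < p) : (k : ZMod p) ≠ 0 :=
  (natCast_eq_zero_iff k p).not.2 (Nat.not_dvd_of_pos_of_lt hk hkp)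

variable [Fact p.Prime]

theorem sum_range_inv_pow_eq_zero {m : ℕ} (hm : m < p - 1) :
    ∑ k ∈ range p, ((k : ZMod p)⁻¹) ^ m = 0 := by
  rw [sum_range_natCast (fun x => x⁻¹ ^ m),
    Fintype.sum_equiv (Equiv.inv _) (fun x => x⁻¹ ^ m) (· ^ m) fun _ => rfl]
  exact FiniteField.sum_pow_lt_card_sub_one _ _ (by rwa [ZMod.card])

theorem sum_Icc_sum_Ico_one_div_mul_eq_zero (hp : 3 < p) :
    ∑ j ∈ Icc 1 (p - 1), ∑ i ∈ Ico 1 j, (1 : ZMod p) / (i * j) = 0 := by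
  have htwo : (2 : ZMod p) ≠ 0 := by exact_mod_cast natCast_ne_zero_of_pos_of_lt two_pos (by omega)
  have hsq := two_mul_sum_range_sum_range_mul_add_sum_sq (fun k => (k : ZMod p)⁻¹) p
  have hsum := sum_range_inv_pow_eq_zero (p := p) (m := 1) (by omega)
  have hsum_sq := sum_range_inv_pow_eq_zero (p := p) (m := 2) (by omega)
  simp only [pow_one] at hsum
  rw [hsum, hsum_sq, add_zero, zero_pow two_ne_zero] at hsq
  rw [sum_Icc_sum_Ico_eq_sum_range_sum_range _ (by simp)]
  simp only [one_div, mul_inv]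
  exact (mul_eq_zero.1 hsq).resolve_left htwo

end ZMod

theorem Nat.cast_factorial_div {K : Type*} [DivisionSemiring K] {m k : ℕ} (hkm : k ≤ m)
    (hk : (k : K) ≠ 0) : ((m ! / k : ℕ) : K) = m ! * (k : K)⁻¹ := by
  have hk0 : 0 < k := Nat.pos_of_ne_zero fun h => hk (by simp [h])
  rw [Nat.cast_div (Nat.dvd_factorial hk0 hkm) hk, div_eq_mul_inv]

def factorialScaledPairSum (m : ℕ) : ℕ :=
  ∑ j ∈ Icc 1 m, ∑ i ∈ Ico 1 j, (m ! / i) * (m ! / j)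

theorem factorial_sq_mul_sum_Icc_sum_Ico_one_div_mul {K : Type*} [Semifield K] (m : ℕ)
    (hK : ∀ k, 0 < k → k ≤ m → (k : K) ≠ 0) :
    (m ! : K) ^ 2 * ∑ j ∈ Icc 1 m, ∑ i ∈ Ico 1 j, 1 / ((i : K) * j) =
      factorialScaledPairSum m := by
  simp only [factorialScaledPairSum, mul_sum, Nat.cast_sum, Nat.cast_mul]
  refine sum_congr rfl fun j hj => sum_congr rfl fun i hi => ?_
  rw [mem_Icc] at hj
  rw [mem_Ico] at hi
  rw [Nat.cast_factorial_div (by omega) (hK i hi.1 (by omega)),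
    Nat.cast_factorial_div hj.2 (hK j hj.1 hj.2), one_div, mul_inv]
  ring

theorem one_le_padicValRat_of_natCast_mul_eq {p : ℕ} [Fact p.Prime] {q : ℚ} {D N : ℕ}
    (hD : ¬ p ∣ D) (hq : D * q = N) (hN : p ∣ N) (hq0 : q ≠ 0) : 1 ≤ padicValRat p q := by
  have hD0 : D ≠ 0 := by rintro rfl; exact hD (dvd_zero p)
  have hN0 : N ≠ 0 := by
    rintro rfl
    exact hq0 (by simpa [hD0] using hq)
  have hval := congrArg (padicValRat p) hq
  rw [padicValRat.mul (by exact_mod_cast hD0) hq0, padicValRat.of_nat, padicValRat.of_nat,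
    padicValNat.eq_zero_of_not_dvd hD] at hval
  have := one_le_padicValNat_of_dvd hN0 hN
  omega

/-- For a prime `p ≥ 5`, the double sum `S = ∑_{1 ≤ i < j ≤ p-1} 1/(i·j)`
vanishes modulo `p`: it is zero or has `p`-adic valuation at least `1`. -/
theorem double_sum_padicValRat_ge_one (p : ℕ) (hp : p.Prime) (h5 : 5 ≤ p) :
    (∑ j ∈ Finset.Icc 1 (p - 1), ∑ i ∈ Finset.Ico 1 j, (1 : ℚ) / (i * j)) = 0 ∨
      1 ≤ padicValRat p
        (∑ j ∈ Finset.Icc 1 (p - 1), ∑ i ∈ Finset.Ico 1 j, (1 : ℚ) / (i * j)) := by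
  have := Fact.mk hp
  have hℚ := factorial_sq_mul_sum_Icc_sum_Ico_one_div_mul (K := ℚ) (p - 1)
    fun k hk _ => Nat.cast_ne_zero.2 hk.ne'
  have hZMod : (factorialScaledPairSum (p - 1) : ZMod p) = 0 := by
    rw [← factorial_sq_mul_sum_Icc_sum_Ico_one_div_mul (p - 1) fun k hk hkp =>
        ZMod.natCast_ne_zero_of_pos_of_lt hk (by omega),
      ZMod.sum_Icc_sum_Ico_one_div_mul_eq_zero (by omega), mul_zero]
  have hD : ¬ p ∣ (p - 1)! ^ 2 := fun h => by
    have := hp.dvd_factorial.1 (hp.dvd_of_dvd_pow h)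
    omega
  exact or_iff_not_imp_left.2 <| one_le_padicValRat_of_natCast_mul_eq hD (by exact_mod_cast hℚ)
    ((ZMod.natCast_eq_zero_iff _ _).1 hZMod)
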